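/- Let (A,B) be a Pythagorean pair on 𝔥 and suppose ξ ∈ 𝔥 is a nonzero vector which is partially contained in each of finitely many pairwise distinct rays p^{(1)},…,p^{(m)} (m ≥ 1), with φ(w)ξ = 0 for every word w not a prefix-operator of one of these rays, and φ(v)ξ orthogonal to 𝔙 for all words v. Then a contradiction follows; i.e. for some i and some n, the vector p^{(i)}_n ξ is contained in the truncated ray _n p^{(i)}. -/

import Mathlib

open Filter Topology

noncomputable def pythWord {H : Type*} [NormedAddCommGroup H] [InnerProductSpace ℂ H]
    (A B : H →L[ℂ] H) (w : List Bool) : H →L[ℂ] H :=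
  (w.map (fun x => if x then B else A)).prod

/-- The operator `p_n` given by composing the operators of the first `n` letters of the
ray `p` (first letter applied first). `false` stands for `a ↦ A`, `true` for `b ↦ B`. -/
noncomputable def rayOp {H : Type*} [NormedAddCommGroup H] [InnerProductSpace ℂ H]
    (A B : H →L[ℂ] H) (p : ℕ → Bool) (n : ℕ) : H →L[ℂ] H :=
  pythWord A B ((List.range n).reverse.map p)

/-- The set  of vectors quasi-contained in finitely many rays. -/
def vSpace {H : Type*} [NormedAddCommGroup H] [InnerProductSpace ℂ H]
    (A B : H →L[ℂ] H) : Set H :=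
  {η | ∃ (m N : ℕ) (ps : Fin m → ℕ → Bool), 1 ≤ m ∧
    ∀ n, N ≤ n → ‖η‖ ^ 2 = ∑ k, ‖rayOp A B (ps k) n η‖ ^ 2}

/-!
By the Pythagorean relation, `‖ξ‖²` is the sum of `‖φ(w)ξ‖²` over all words `w` of a fixed
length `n`. Once `n` separates the prefixes of the given rays, every other word kills `ξ`, so
`‖ξ‖² = ∑ᵢ ‖p⁽ⁱ⁾ₙ ξ‖²` for all large `n`. Each `‖p⁽ⁱ⁾ₙ ξ‖` is nonincreasing in `n`, so a constant
sum forces every term to be eventually constant, and then equal to its limit `c`, which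
partial containment forbids.
-/

lemma eventually_injective_prefix {ι α : Type*} [Finite ι] {p : ι → ℕ → α}
    (hp : Function.Injective p) :
    ∀ᶠ n in atTop, Function.Injective fun i (k : Fin n) => p i k := by
  have hsep : ∀ᶠ n in atTop, ∀ i j, p i ≠ p j → ∃ k < n, p i k ≠ p j k := by
    refine eventually_all.2 fun i => eventually_all.2 fun j => ?_
    by_cases hij : p i = p j
    · exact Eventually.of_forall fun _ h => absurd hij h
    · obtain ⟨k, hk⟩ := Function.ne_iff.1 hij
      filter_upwards [eventually_gt_atTop k] with n hn _ using ⟨k, hn, hk⟩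
  filter_upwards [hsep] with n hn i j hij
  by_contra hne
  obtain ⟨k, hk, hpk⟩ := hn i j (hp.ne hne)
  exact hpk (congrFun hij ⟨k, hk⟩)

section Words

variable {H : Type*} [NormedAddCommGroup H] [InnerProductSpace ℂ H] {A B : H →L[ℂ] H}

lemma rayOp_zero (w : ℕ → Bool) : rayOp A B w 0 = 1 := by
  simp [rayOp, pythWord]

lemma rayOp_succ (w : ℕ → Bool) (n : ℕ) :
    rayOp A B w (n + 1) = (if w n then B else A) * rayOp A B w n := by
  simp [rayOp, pythWord, List.range_succ]

lemma rayOp_congr {w w' : ℕ → Bool} {n : ℕ} (h : ∀ k < n, w k = w' k) :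
    rayOp A B w n = rayOp A B w' n := by
  unfold rayOp
  congr 1
  refine List.map_congr_left fun k hk => h k ?_
  simpa using hk

def Fin.extendWord {n : ℕ} (f : Fin n → Bool) : ℕ → Bool :=
  fun k => if h : k < n then f ⟨k, h⟩ else false

lemma rayOp_extendWord_snoc {n : ℕ} (f : Fin n → Bool) (b : Bool) :
    rayOp A B (Fin.extendWord (Fin.snoc f b : Fin (n + 1) → Bool)) (n + 1)
      = (if b then B else A) * rayOp A B (Fin.extendWord f) n := by
  have hlast : Fin.extendWord (Fin.snoc f b : Fin (n + 1) → Bool) n = b := by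
    simp [Fin.extendWord, Fin.snoc]
  have hinit : ∀ k < n, Fin.extendWord (Fin.snoc f b : Fin (n + 1) → Bool) k
      = Fin.extendWord f k := fun k hk => by
    simp [Fin.extendWord, Fin.snoc, hk, Nat.lt_succ_of_lt hk]
  rw [rayOp_succ, hlast, rayOp_congr hinit]

end Words

section PythagoreanPair

variable {H : Type*} [NormedAddCommGroup H] [InnerProductSpace ℂ H] [CompleteSpace H]
  (A B : H →L[ℂ] H)

def IsPythagoreanPair : Prop :=
  (ContinuousLinearMap.adjoint A).comp A + (ContinuousLinearMap.adjoint B).comp B = 1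

variable {A B}

lemma IsPythagoreanPair.norm_sq_add_norm_sq (h : IsPythagoreanPair A B) (η : H) :
    ‖A η‖ ^ 2 + ‖B η‖ ^ 2 = ‖η‖ ^ 2 := by
  have hη := congrArg (fun T : H →L[ℂ] H => (inner ℂ (T η) η : ℂ)) h
  simp only [add_apply, ContinuousLinearMap.comp_apply, one_apply_eq_self, inner_add_left,
    ContinuousLinearMap.adjoint_inner_left, inner_self_eq_norm_sq_to_K] at hη
  exact_mod_cast hη

lemma IsPythagoreanPair.norm_letter_le (h : IsPythagoreanPair A B) (b : Bool) (η : H) :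
    ‖(if b then B else A) η‖ ≤ ‖η‖ := by
  have hη := h.norm_sq_add_norm_sq η
  refine (pow_le_pow_iff_left₀ (norm_nonneg _) (norm_nonneg _) two_ne_zero).1 ?_
  cases b
  · simpa using le_of_add_le_of_nonneg_left hη.le (sq_nonneg ‖B η‖)
  · simpa using le_of_add_le_of_nonneg_right hη.le (sq_nonneg ‖A η‖)

lemma IsPythagoreanPair.antitone_norm_rayOp (h : IsPythagoreanPair A B) (w : ℕ → Bool) (η : H) :
    Antitone fun n => ‖rayOp A B w n η‖ := by
  refine antitone_nat_of_succ_le fun n => ?_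
  rw [rayOp_succ, mul_apply_eq_comp]
  exact h.norm_letter_le _ _

lemma IsPythagoreanPair.sum_norm_sq_rayOp_extendWord (h : IsPythagoreanPair A B) (n : ℕ)
    (η : H) : ∑ f : Fin n → Bool, ‖rayOp A B (Fin.extendWord f) n η‖ ^ 2 = ‖η‖ ^ 2 := by
  induction n with
  | zero => simp [rayOp_zero]
  | succ n ih =>
    rw [← (Fin.snocEquiv fun _ => Bool).sum_comp, Fintype.sum_prod_type_right, ← ih]
    refine Finset.sum_congr rfl fun f _ => ?_
    simp only [Fin.snocEquiv, Equiv.coe_fn_mk, rayOp_extendWord_snoc, mul_apply_eq_comp,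
      Fintype.sum_bool, if_true, Bool.false_eq_true, if_false]
    rw [add_comm, h.norm_sq_add_norm_sq]

lemma IsPythagoreanPair.norm_sq_eq_sum_norm_sq_rayOp (h : IsPythagoreanPair A B) {ι : Type*}
    [Fintype ι] {p : ι → ℕ → Bool} {n : ℕ} (hp : Function.Injective fun i (k : Fin n) => p i k)
    {η : H} (hkill : ∀ w : ℕ → Bool, (¬ ∃ i, ∀ k < n, w k = p i k) → rayOp A B w n η = 0) :
    ‖η‖ ^ 2 = ∑ i, ‖rayOp A B (p i) n η‖ ^ 2 := by
  classical
  set prefixOf : ι → Fin n → Bool := fun i k => p i k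
  rw [← h.sum_norm_sq_rayOp_extendWord n η,
    ← Finset.sum_subset (Finset.subset_univ (Finset.univ.image prefixOf)),
    Finset.sum_image fun i _ j _ hij => hp hij]
  · refine Finset.sum_congr rfl fun i _ => ?_
    have hword : ∀ k < n, Fin.extendWord (prefixOf i) k = p i k := fun k hk => by
      simp [prefixOf, Fin.extendWord, hk]
    rw [rayOp_congr hword]
  · intro f _ hf
    rw [hkill, norm_zero, zero_pow two_ne_zero]
    rintro ⟨i, hi⟩
    refine hf (Finset.mem_image.2 ⟨i, Finset.mem_univ i, funext fun k => ?_⟩)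
    simpa [Fin.extendWord, prefixOf] using (hi k k.isLt).symm

/-- In the paper's terms: `(p i)_N η` is contained in the truncated ray `_N (p i)`. -/
lemma IsPythagoreanPair.exists_norm_rayOp_eq (h : IsPythagoreanPair A B) {ι : Type*}
    [Fintype ι] {p : ι → ℕ → Bool} (hp : Function.Injective p) {η : H}
    (hkill : ∀ (w : ℕ → Bool) (n : ℕ), (¬ ∃ i, ∀ k < n, w k = p i k) → rayOp A B w n η = 0) :
    ∃ N, ∀ i, ∀ n ≥ N, ‖rayOp A B (p i) n η‖ = ‖rayOp A B (p i) N η‖ := by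
  obtain ⟨N, hN⟩ := (eventually_injective_prefix hp).exists_forall_of_atTop
  refine ⟨N, fun i n hn => ?_⟩
  have hsum : ∑ j, ‖rayOp A B (p j) n η‖ ^ 2 = ∑ j, ‖rayOp A B (p j) N η‖ ^ 2 := by
    rw [← h.norm_sq_eq_sum_norm_sq_rayOp (hN n hn) (hkill · n),
      ← h.norm_sq_eq_sum_norm_sq_rayOp (hN N le_rfl) (hkill · N)]
  have hle : ∀ j ∈ Finset.univ, ‖rayOp A B (p j) n η‖ ^ 2 ≤ ‖rayOp A B (p j) N η‖ ^ 2 :=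
    fun j _ => pow_le_pow_left₀ (norm_nonneg _) (h.antitone_norm_rayOp (p j) η hn) 2
  exact (pow_left_inj₀ (norm_nonneg _) (norm_nonneg _) two_ne_zero).1
    ((Finset.sum_eq_sum_iff_of_le hle).1 hsum i (Finset.mem_univ i))

end PythagoreanPair

theorem pythagorean_pair_partially_contained_finitely_many_rays_contradiction_general
    {H : Type*} [NormedAddCommGroup H] [InnerProductSpace ℂ H] [CompleteSpace H]
    (A B : H →L[ℂ] H)
    (hpyth : (ContinuousLinearMap.adjoint A).comp A
      + (ContinuousLinearMap.adjoint B).comp B = 1)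
    (m : ℕ) (hm : 1 ≤ m) (p : Fin m → ℕ → Bool)
    (hdist : ∀ i j : Fin m, i ≠ j → p i ≠ p j)
    (ξ : H)
    (hpart : ∀ i : Fin m, ∃ c : ℝ, 0 < c ∧
      Tendsto (fun n => ‖rayOp A B (p i) n ξ‖) atTop (nhds c) ∧
      ∀ n, ‖rayOp A B (p i) n ξ‖ ≠ c)
    (hkill : ∀ (w : ℕ → Bool) (n : ℕ),
      (¬ ∃ i : Fin m, ∀ k < n, w k = p i k) → rayOp A B w n ξ = 0) :
    False := by
  have hp : Function.Injective p := fun i j hij => by_contra fun hne => hdist i j hne hij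
  obtain ⟨N, hN⟩ := IsPythagoreanPair.exists_norm_rayOp_eq hpyth hp hkill
  obtain ⟨c, -, hc, hne⟩ := hpart ⟨0, hm⟩
  exact hne N (tendsto_nhds_unique (tendsto_atTop_of_eventually_const (hN _)) hc)

theorem pythagorean_pair_partially_contained_finitely_many_rays_contradiction
    {H : Type*} [NormedAddCommGroup H] [InnerProductSpace ℂ H] [CompleteSpace H]
    (A B : H →L[ℂ] H)
    (hpyth : (ContinuousLinearMap.adjoint A).comp A
      + (ContinuousLinearMap.adjoint B).comp B = 1)
    (m : ℕ) (hm : 1 ≤ m) (p : Fin m → ℕ → Bool)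
    (hdist : ∀ i j : Fin m, i ≠ j → p i ≠ p j)
    (ξ : H) (hξ0 : ξ ≠ 0)
    (hpart : ∀ i : Fin m, ∃ c : ℝ, 0 < c ∧
      Tendsto (fun n => ‖rayOp A B (p i) n ξ‖) atTop (nhds c) ∧
      ∀ n, ‖rayOp A B (p i) n ξ‖ ≠ c)
    (hkill : ∀ (w : ℕ → Bool) (n : ℕ),
      (¬ ∃ i : Fin m, ∀ k < n, w k = p i k) → rayOp A B w n ξ = 0)
    (horth : ∀ (w : ℕ → Bool) (n : ℕ), ∀ η ∈ vSpace A B,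
      (inner ℂ (rayOp A B w n ξ) η : ℂ) = 0) :
    False :=
  pythagorean_pair_partially_contained_finitely_many_rays_contradiction_general A B hpyth m hm p
    hdist ξ hpart hkill
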